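/- arXiv:1305.1501 — 3 statements merged into one kernel-verified Lean document; each statement's English description precedes it below -/
import Mathlib

section
/- Let u = u_mid + θ × ζ be a displacement field where u_mid and θ are extended constantly along normal directions of a curve Σ (i.e., u_mid(x) = u_mid(p(x)), θ(x) = θ(p(x))) and ζ is the vector distance function. Then the normal-plane components of the symmetric gradient vanish: Q ε(u) Q = 0, where ε(u) = (∇u + (∇u)ᵀ)/2 and Q = I − t ⊗ t. -/
open Matrix

noncomputable def crossCLM : (Fin 3 → ℝ) →L[ℝ] (Fin 3 → ℝ) →L[ℝ] (Fin 3 → ℝ) :=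
  LinearMap.toContinuousLinearMap
    (((LinearMap.toContinuousLinearMap :
        ((Fin 3 → ℝ) →ₗ[ℝ] (Fin 3 → ℝ)) ≃ₗ[ℝ] ((Fin 3 → ℝ) →L[ℝ] (Fin 3 → ℝ)))
      : ((Fin 3 → ℝ) →ₗ[ℝ] (Fin 3 → ℝ)) →ₗ[ℝ] ((Fin 3 → ℝ) →L[ℝ] (Fin 3 → ℝ))) ∘ₗ crossProduct)

@[simp] lemma crossCLM_apply (a b : Fin 3 → ℝ) : crossCLM a b = crossProduct a b := rfl


/-- Let `u = u_mid + θ × ζ` be a displacement field where `u_mid` and `θ`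
are extended constantly along normal directions of the curve `Σ` (their derivatives in
directions orthogonal to the tangent `t` vanish) and `ζ` is the vector distance function
(with `(t·∇)ζ = 0` and `(n·∇)ζ = n` for `n ⊥ t`).  Then the normal-plane components of the
symmetric gradient vanish: `Q ε(u) Q = 0`, where `ε(u) = (∇u + (∇u)ᵀ)/2` and
`Q = I - t ⊗ t`. -/
theorem statement6
    (x t : Fin 3 → ℝ) (ht : t ⬝ᵥ t = 1)
    (umid θf ζ u : (Fin 3 → ℝ) → (Fin 3 → ℝ))
    (hum : DifferentiableAt ℝ umid x)
    (hθ : DifferentiableAt ℝ θf x)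
    (hζ : DifferentiableAt ℝ ζ x)
    (humn : ∀ nrm : Fin 3 → ℝ, nrm ⬝ᵥ t = 0 → fderiv ℝ umid x nrm = 0)
    (hθn : ∀ nrm : Fin 3 → ℝ, nrm ⬝ᵥ t = 0 → fderiv ℝ θf x nrm = 0)
    (hζt : fderiv ℝ ζ x t = 0)
    (hζn : ∀ nrm : Fin 3 → ℝ, nrm ⬝ᵥ t = 0 → fderiv ℝ ζ x nrm = nrm)
    (hu : u = fun y => umid y + crossProduct (θf y) (ζ y)) :
    let J : Matrix (Fin 3) (Fin 3) ℝ := Matrix.of fun i j => fderiv ℝ u x (Pi.single i 1) j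
    let ε : Matrix (Fin 3) (Fin 3) ℝ := (1 / 2 : ℝ) • (J + Jᵀ)
    let Q : Matrix (Fin 3) (Fin 3) ℝ := 1 - vecMulVec t t
    Q * ε * Q = 0 := by
  intro J ε Q
  -- derivative of u
  have hc : HasFDerivAt (fun y => crossCLM (θf y) (ζ y))
      (crossCLM.precompR (Fin 3 → ℝ) (θf x) (fderiv ℝ ζ x)
        + crossCLM.precompL (Fin 3 → ℝ) (fderiv ℝ θf x) (ζ x)) x :=
    crossCLM.hasFDerivAt_of_bilinear hθ.hasFDerivAt hζ.hasFDerivAt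
  have hU : HasFDerivAt u
      (fderiv ℝ umid x + (crossCLM.precompR (Fin 3 → ℝ) (θf x) (fderiv ℝ ζ x)
        + crossCLM.precompL (Fin 3 → ℝ) (fderiv ℝ θf x) (ζ x))) x := by
    rw [hu]
    exact hum.hasFDerivAt.add hc
  have hfd := hU.fderiv
  have key : ∀ n : Fin 3 → ℝ, n ⬝ᵥ t = 0 → fderiv ℝ u x n = crossProduct (θf x) n := by
    intro n hn
    rw [hfd]
    simp [ContinuousLinearMap.precompR, ContinuousLinearMap.precompL,
      humn n hn, hθn n hn, hζn n hn]
  -- normal vectors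
  set q : Fin 3 → Fin 3 → ℝ := fun j => Pi.single j 1 - t j • t with hq
  have ht' : t 0 * t 0 + t 1 * t 1 + t 2 * t 2 = 1 := by
    have := ht; simpa [dotProduct, Fin.sum_univ_three] using this
  have hqt : ∀ j, q j ⬝ᵥ t = 0 := by
    intro j
    fin_cases j
    · simp [hq, dotProduct, Pi.single_apply, Fin.sum_univ_three]
      linear_combination (-t 0) * ht'
    · simp [hq, dotProduct, Pi.single_apply, Fin.sum_univ_three]
      linear_combination (-t 1) * ht'
    · simp [hq, dotProduct, Pi.single_apply, Fin.sum_univ_three]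
      linear_combination (-t 2) * ht'
  have hD : ∀ j, fderiv ℝ u x (q j) = crossProduct (θf x) (q j) := fun j => key (q j) (hqt j)
  have hJ : ∀ k l, J k l = fderiv ℝ u x (Pi.single k 1) l := fun k l => rfl
  have hv : ∀ v : Fin 3 → ℝ,
      v = v 0 • (Pi.single 0 1 : Fin 3 → ℝ) + v 1 • (Pi.single 1 1 : Fin 3 → ℝ)
        + v 2 • (Pi.single 2 1 : Fin 3 → ℝ) := by
    intro v; ext k; fin_cases k <;> simp
  have hA : ∀ (i : Fin 3) (l : Fin 3),
      q i 0 * J 0 l + q i 1 * J 1 l + q i 2 * J 2 l = crossProduct (θf x) (q i) l := by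
    intro i l
    have h1 : fderiv ℝ u x (q i) l = q i 0 * J 0 l + q i 1 * J 1 l + q i 2 * J 2 l := by
      conv_lhs => rw [hv (q i)]
      simp [hJ]
    rw [← h1, hD i]
  have h0 : ∀ i j : Fin 3,
      q j ⬝ᵥ crossProduct (θf x) (q i) + q i ⬝ᵥ crossProduct (θf x) (q j) = 0 := by
    intro i j
    rw [triple_product_permutation (q j), triple_product_permutation (q i),
      ← dotProduct_add, cross_anticomm' (q i) (q j), dotProduct_zero]
  have hQ : ∀ a b, Q a b = q a b := by
    intro a b
    simp [Q, hq, vecMulVec_apply, Matrix.one_apply, Pi.single_apply, eq_comm]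
  have hε : ∀ k l, ε k l = (1/2 : ℝ) * (J k l + J l k) := by
    intro k l
    simp [ε, Matrix.smul_apply, Matrix.add_apply, Matrix.transpose_apply]
    ring
  have hqs : ∀ a b, q a b = q b a := by
    intro a b
    rcases eq_or_ne a b with rfl | hab
    · rfl
    · simp [hq, Pi.single_apply, hab, Ne.symm hab, mul_comm]
  ext i j
  have h0' := h0 i j
  simp only [dotProduct, Fin.sum_univ_three] at h0'
  have e1 := hA i 0; have e2 := hA i 1; have e3 := hA i 2
  have f1 := hA j 0; have f2 := hA j 1; have f3 := hA j 2
  simp only [Matrix.mul_apply, Fin.sum_univ_three, hQ, hε, Matrix.zero_apply]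
  have g0 : q 0 j = q j 0 := hqs 0 j
  have g1 : q 1 j = q j 1 := hqs 1 j
  have g2 : q 2 j = q j 2 := hqs 2 j
  linear_combination (1/2 : ℝ) * (q j 0 * e1 + q j 1 * e2 + q j 2 * e3
    + q i 0 * f1 + q i 1 * f2 + q i 2 * f3) + (1/2 : ℝ) * h0'
    + ((1/2 : ℝ) * (q i 0 * (J 0 0 + J 0 0) + q i 1 * (J 1 0 + J 0 1) + q i 2 * (J 2 0 + J 0 2))) * g0
    + ((1/2 : ℝ) * (q i 0 * (J 0 1 + J 1 0) + q i 1 * (J 1 1 + J 1 1) + q i 2 * (J 2 1 + J 1 2))) * g1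
    + ((1/2 : ℝ) * (q i 0 * (J 0 2 + J 2 0) + q i 1 * (J 1 2 + J 2 1) + q i 2 * (J 2 2 + J 2 2))) * g2
end

section
/- If θ_t is a scalar field constant along normal directions of Σ and t is the extended unit tangent, then Q ∇(θ_t t × ζ) Q = −Q Skew(θ_t t) Q on Σ, where Skew(v) denotes the skew-symmetric matrix such that Skew(v)w = v × w; in particular this term contributes nothing to the symmetric strain tensor restricted to the normal plane. -/
open Matrix

/-- The cross product as a continuous bilinear map. -/
noncomputable def crossL : (Fin 3 → ℝ) →L[ℝ] (Fin 3 → ℝ) →L[ℝ] (Fin 3 → ℝ) :=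
  LinearMap.toContinuousLinearMap
    ((LinearMap.toContinuousLinearMap :
        ((Fin 3 → ℝ) →ₗ[ℝ] (Fin 3 → ℝ)) ≃ₗ[ℝ] ((Fin 3 → ℝ) →L[ℝ] (Fin 3 → ℝ))).toLinearMap
      ∘ₗ crossProduct)

@[simp] lemma crossL_apply (a b : Fin 3 → ℝ) : crossL a b = crossProduct a b := by
  simp [crossL]

lemma clm_sum_single (L : (Fin 3 → ℝ) →L[ℝ] (Fin 3 → ℝ)) (w : Fin 3 → ℝ) :
    L w = ∑ k, w k • L (Pi.single k 1) := by
  conv_lhs => rw [← Finset.univ_sum_single w]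
  rw [map_sum]
  refine Finset.sum_congr rfl fun k _ => ?_
  rw [← L.map_smul]
  congr 1
  rw [← Pi.single_smul, smul_eq_mul, mul_one]

/-- The skew-symmetric matrix of `v ∈ ℝ³`, satisfying `skewMat v *ᵥ w = v × w`. -/
def skewMat (v : Fin 3 → ℝ) : Matrix (Fin 3) (Fin 3) ℝ :=
  !![0, -v 2, v 1; v 2, 0, -v 0; -v 1, v 0, 0]

/-- If `θ_t` is a scalar field constant along normal directions of `Σ` and
`t` is the extended unit tangent field (constant along normal directions), then for the
field `θ_t t × ζ` one has `Q ∇(θ_t t × ζ) Q = -Q Skew(θ_t t) Q` on `Σ`, where `Skew(v)` is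
the skew-symmetric matrix with `Skew(v) w = v × w`; in particular this term contributes
nothing to the symmetric strain tensor restricted to the normal plane. -/
theorem statement7
    (x t : Fin 3 → ℝ) (ht : t ⬝ᵥ t = 1)
    (tf ζ : (Fin 3 → ℝ) → (Fin 3 → ℝ)) (θt : (Fin 3 → ℝ) → ℝ)
    (htf : DifferentiableAt ℝ tf x) (htx : tf x = t)
    (hθt : DifferentiableAt ℝ θt x)
    (hζdiff : DifferentiableAt ℝ ζ x)
    (htn : ∀ nrm : Fin 3 → ℝ, nrm ⬝ᵥ t = 0 → fderiv ℝ tf x nrm = 0)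
    (hθn : ∀ nrm : Fin 3 → ℝ, nrm ⬝ᵥ t = 0 → fderiv ℝ θt x nrm = 0)
    (hζt : fderiv ℝ ζ x t = 0)
    (hζn : ∀ nrm : Fin 3 → ℝ, nrm ⬝ᵥ t = 0 → fderiv ℝ ζ x nrm = nrm)
    (v : (Fin 3 → ℝ) → (Fin 3 → ℝ))
    (hv : v = fun y => θt y • crossProduct (tf y) (ζ y)) :
    let J : Matrix (Fin 3) (Fin 3) ℝ := Matrix.of fun i j => fderiv ℝ v x (Pi.single i 1) j
    let Q : Matrix (Fin 3) (Fin 3) ℝ := 1 - vecMulVec t t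
    Q * J * Q = -(Q * skewMat (θt x • t) * Q) := by
  intro J Q
  have hC : HasFDerivAt (fun y => crossL (tf y) (ζ y))
      (crossL.precompR (Fin 3 → ℝ) (tf x) (fderiv ℝ ζ x)
        + crossL.precompL (Fin 3 → ℝ) (fderiv ℝ tf x) (ζ x)) x :=
    crossL.hasFDerivAt_of_bilinear htf.hasFDerivAt hζdiff.hasFDerivAt
  have hV : HasFDerivAt v
      (θt x • (crossL.precompR (Fin 3 → ℝ) (tf x) (fderiv ℝ ζ x)
        + crossL.precompL (Fin 3 → ℝ) (fderiv ℝ tf x) (ζ x))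
        + (fderiv ℝ θt x).smulRight (crossL (tf x) (ζ x))) x := by
    rw [hv]
    have := hθt.hasFDerivAt.smul hC
    simpa using this
  have hfd := hV.fderiv
  have key : ∀ n : Fin 3 → ℝ, n ⬝ᵥ t = 0 →
      fderiv ℝ v x n = θt x • crossProduct t n := by
    intro n hn
    rw [hfd]
    simp [ContinuousLinearMap.precompR, ContinuousLinearMap.precompL,
      htn n hn, hθn n hn, hζn n hn, htx]
  suffices h : Q * J = -(Q * skewMat (θt x • t)) by
    rw [h, neg_mul]
  ext i l
  set L := fderiv ℝ v x with hL
  have hn : (Pi.single i 1 - t i • t : Fin 3 → ℝ) ⬝ᵥ t = 0 := by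
    rw [sub_dotProduct, smul_dotProduct, ht, single_dotProduct]
    simp
  have hkey := key _ hn
  have hrow : (Q * J) i l = (L (Pi.single i 1 - t i • t)) l := by
    rw [clm_sum_single L (Pi.single i 1 - t i • t)]
    simp only [Matrix.mul_apply, Fin.sum_univ_three, Finset.sum_apply, Pi.smul_apply,
      Pi.sub_apply, smul_eq_mul]
    simp only [Q, J, Matrix.sub_apply, Matrix.one_apply, vecMulVec_apply, Matrix.of_apply, hL]
    fin_cases i <;> simp [Pi.single_apply]
  rw [hrow, hkey]
  simp only [Matrix.neg_apply, Matrix.mul_apply, Fin.sum_univ_three]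
  fin_cases i <;> fin_cases l <;>
    simp [cross_apply, skewMat, Q, Matrix.sub_apply, Matrix.one_apply,
      vecMulVec_apply, Pi.single_apply] <;> ring
end

section
/- For vectors in ℝ³: if θ = ∇ × u_mid + t θ_t with t the unit tangent of Σ and u_mid constant in normal directions, then (Qθ) × t = Q (t·∇) u_mid, where Q = I − t ⊗ t; i.e., the Euler–Bernoulli kinematic assumption yields zero shear strain Q(t·∇)u_mid − (Qθ) × t = 0. -/
open Matrix

/-- **Euler–Bernoulli kinematics yield zero shear.** If
`θ = ∇ × u_mid + θ_t t` with `t` the unit tangent of `Σ` and `u_mid` constant in normal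
directions (derivatives in directions orthogonal to `t` vanish), then
`(Qθ) × t = Q (t·∇) u_mid`, where `Q = I - t ⊗ t`; i.e. the shear strain
`Q(t·∇)u_mid - (Qθ) × t` vanishes. -/
theorem statement14
    (x t : Fin 3 → ℝ) (ht : t ⬝ᵥ t = 1)
    (umid : (Fin 3 → ℝ) → (Fin 3 → ℝ)) (θt : ℝ)
    (hum : DifferentiableAt ℝ umid x)
    (humn : ∀ nrm : Fin 3 → ℝ, nrm ⬝ᵥ t = 0 → fderiv ℝ umid x nrm = 0) :
    let J : Matrix (Fin 3) (Fin 3) ℝ :=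
      Matrix.of fun i j => fderiv ℝ umid x (Pi.single i 1) j
    let curlu : Fin 3 → ℝ := ![J 1 2 - J 2 1, J 2 0 - J 0 2, J 0 1 - J 1 0]
    let θ : Fin 3 → ℝ := curlu + θt • t
    let Q : Matrix (Fin 3) (Fin 3) ℝ := 1 - vecMulVec t t
    crossProduct (Q *ᵥ θ) t = Q *ᵥ (fderiv ℝ umid x t) ∧
      Q *ᵥ (fderiv ℝ umid x t) - crossProduct (Q *ᵥ θ) t = 0 := by
  intro J curlu θ Q
  set D : Fin 3 → ℝ := fderiv ℝ umid x t with hD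
  have hJ : ∀ i j, J i j = t i * D j := by
    intro i j
    have hn : (Pi.single i 1 - t i • t) ⬝ᵥ t = 0 := by
      have : (Pi.single i 1 : Fin 3 → ℝ) ⬝ᵥ t = t i := by
        simp [dotProduct, Pi.single_apply, Finset.sum_ite_eq']
      simp [sub_dotProduct, smul_dotProduct, this, ht]
    have h0 := humn _ hn
    have : fderiv ℝ umid x (Pi.single i 1) = t i • D := by
      have := (fderiv ℝ umid x).map_sub (Pi.single i 1) (t i • t)
      rw [h0] at this
      have h2 : fderiv ℝ umid x (t i • t) = t i • D := by
        rw [(fderiv ℝ umid x).map_smul]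
      linear_combination (norm := abel) this.symm + h2
    simp [J, this]
  have h1 : t 0 * t 0 + t 1 * t 1 + t 2 * t 2 = 1 := by
    simpa [dotProduct, Fin.sum_univ_three] using ht
  have key : crossProduct (Q *ᵥ θ) t = Q *ᵥ D := by
    funext k
    fin_cases k <;>
      simp (config := { decide := true }) only [cross_apply, Q, θ, curlu, mulVec, dotProduct,
        Fin.sum_univ_three, vecMulVec_apply, Pi.add_apply, Pi.smul_apply, smul_eq_mul,
        Matrix.sub_apply, Matrix.one_apply, hJ, Matrix.cons_val_zero, Matrix.cons_val_one,
        Matrix.head_cons, Matrix.cons_val_two, Matrix.tail_cons, Fin.isValue,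
        Matrix.cons_val', Matrix.empty_val', Matrix.cons_val_fin_one,
        Fin.mk_zero, Fin.mk_one, show ((⟨2, by norm_num⟩ : Fin 3) = 2) from rfl,
        Fin.ext_iff, Fin.val_zero, Fin.val_one] <;>
      norm_num <;>
      first
        | linear_combination D 0 * h1
        | linear_combination D 1 * h1
        | linear_combination D 2 * h1
        | linear_combination (-(D 0)) * h1
        | linear_combination (-(D 1)) * h1
        | linear_combination (-(D 2)) * h1
  refine ⟨key, by rw [key]; simp⟩
end
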